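/- Let q ≥ 3 and n ≥ 3. For every w ∈ B_q(n) and every w' ∈ A_q(n) ∪ B_q(n), no nonempty proper prefix of w is equal to a suffix of w'. -/

import Mathlib

/-- Value of a letter: 1 ↦ +1, 0 ↦ -1, other letters ↦ 0. -/
def mval (a : ℕ) : ℤ := if a = 1 then 1 else if a = 0 then -1 else 0

/-- Value-sum of a word. -/
def vsum (w : List ℕ) : ℤ := (w.map mval).sum

/-- A (q-2)-colored Motzkin word over the alphabet Z_q = {0,...,q-1}:
all letters < q, every prefix has nonnegative value-sum, total value-sum 0. -/
def IsMotzkinWord (q : ℕ) (w : List ℕ) : Prop :=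
  (∀ a ∈ w, a < q) ∧ (∀ u, u <+: w → 0 ≤ vsum u) ∧ vsum w = 0

/-- The set 𝓜_{q-2}(n) of (q-2)-colored Motzkin words of length n. -/
def MotzkinSet (q n : ℕ) : Set (List ℕ) := {w | w.length = n ∧ IsMotzkinWord q w}

/-- M_{q-2}(n), the number of (q-2)-colored Motzkin words of length n. -/
noncomputable def Mnum (q n : ℕ) : ℕ := (MotzkinSet q n).ncard

/-- The set Ê_{q-2}(n) of elevated (q-2)-colored Motzkin words of length n:
words 1α0 with α ∈ 𝓜_{q-2}(n-2). -/
def ElevatedSet (q n : ℕ) : Set (List ℕ) :=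
  {w | w.length = n ∧ ∃ α ∈ MotzkinSet q (n - 2), w = 1 :: (α ++ [0])}

/-- The set A_q(n). -/
def SetA (q n : ℕ) : Set (List ℕ) :=
  {w | ∃ i ≤ n / 2, ∃ α ∈ MotzkinSet q i, ∃ β ∈ ElevatedSet q (n - i), w = α ++ β} \
    {w | ∃ α ∈ ElevatedSet q (n / 2), ∃ β ∈ ElevatedSet q (n / 2), w = α ++ β}

/-- The set B_q(n). -/
def SetB (q n : ℕ) : Set (List ℕ) :=
  {w | ∃ i ≤ n / 2 - 1, ∃ α ∈ MotzkinSet q i, ∃ β ∈ ElevatedSet q (n - i - 1),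
    w = 1 :: (α ++ β)}

/-- The set C_q(n): words γ0 with γ a (q-2)-colored Motzkin word of length n-1
having no factor which is an elevated Motzkin word of length j ≥ ⌈n/2⌉. -/
def SetC (q n : ℕ) : Set (List ℕ) :=
  {w | ∃ γ ∈ MotzkinSet q (n - 1),
    (∀ j, (n + 1) / 2 ≤ j → ∀ β ∈ ElevatedSet q j, ¬ β <:+: γ) ∧ w = γ ++ [0]}

/-- The cross-bifix-free candidate set CBFS_q(n). -/
def CBFS (q n : ℕ) : Set (List ℕ) := SetA q n ∪ SetB q n ∪ SetC q n

/-- A word is bifix-free if no nonempty proper prefix of it is also a suffix of it. -/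
def BifixFree (w : List ℕ) : Prop :=
  ∀ u, u <+: w → u ≠ [] → u.length < w.length → ¬ u <:+ w

/-- BF_q(n): the set of bifix-free words of length n over Z_q. -/
def BF (q n : ℕ) : Set (List ℕ) := {w | w.length = n ∧ (∀ a ∈ w, a < q) ∧ BifixFree w}

/-- F_{k,q}(n): the number of words of length n over Z_q avoiding k consecutive 0's. -/
noncomputable def Fcount (k q n : ℕ) : ℕ :=
  {w : List ℕ | w.length = n ∧ (∀ a ∈ w, a < q) ∧ ¬ List.replicate k 0 <:+: w}.ncard

/-- The set S_{k,q}(n) of Bajic--Stojanovic--Chee--Kiah type words: words s of length n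
over Z_q with s₁ = ⋯ = s_k = 0, s_{k+1} ≠ 0, s_n ≠ 0, and such that the subword
s_{k+2} ⋯ s_{n-1} contains no k consecutive 0's. -/
def SetS (q k n : ℕ) : Set (List ℕ) :=
  {s | s.length = n ∧ (∀ a ∈ s, a < q) ∧ s.take k = List.replicate k 0 ∧
    s.getD k 0 ≠ 0 ∧ s.getLast? ≠ some 0 ∧
    ¬ List.replicate k 0 <:+: (s.drop (k + 1)).take (n - k - 2)}

/-!
Every word of `B_q(n)` has the form `1v` with `v` a Motzkin path, so each of its nonempty
prefixes has value-sum at least `1`. Words of `A_q(n)` are Motzkin paths, and a proper suffix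
of a word `1v' ∈ B_q(n)` is a suffix of the Motzkin path `v'`; a suffix of a Motzkin path has
value-sum at most `0`, being its total `0` minus a prefix sum `≥ 0`.
-/

/-- A Motzkin word with the alphabet left unrestricted. -/
def IsMotzkinPath (w : List ℕ) : Prop :=
  (∀ u, u <+: w → 0 ≤ vsum u) ∧ vsum w = 0

@[simp]
lemma vsum_nil : vsum [] = 0 := rfl

@[simp]
lemma vsum_cons (a : ℕ) (w : List ℕ) : vsum (a :: w) = mval a + vsum w := by
  simp [vsum]

@[simp]
lemma vsum_append (u v : List ℕ) : vsum (u ++ v) = vsum u + vsum v := by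
  simp [vsum]

lemma IsMotzkinWord.isMotzkinPath {q : ℕ} {w : List ℕ} (h : IsMotzkinWord q w) :
    IsMotzkinPath w :=
  h.2

namespace IsMotzkinPath

variable {u v w : List ℕ}

lemma vsum_nonpos_of_suffix (hw : IsMotzkinPath w) (hu : u <:+ w) : vsum u ≤ 0 := by
  obtain ⟨p, rfl⟩ := hu
  have hp := hw.1 p (List.prefix_append p u)
  have htotal := hw.2
  rw [vsum_append] at htotal
  linarith

lemma append (hu : IsMotzkinPath u) (hv : IsMotzkinPath v) : IsMotzkinPath (u ++ v) := by
  refine ⟨fun t ht => ?_, by simp [hu.2, hv.2]⟩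
  rcases le_total t.length u.length with hle | hle
  · exact hu.1 t (List.prefix_of_prefix_length_le ht (u.prefix_append v) hle)
  · obtain ⟨s, rfl⟩ := List.prefix_of_prefix_length_le (u.prefix_append v) ht hle
    rw [vsum_append, hu.2, zero_add]
    exact hv.1 s ((List.prefix_append_right_inj u).mp ht)

lemma elevate (hw : IsMotzkinPath w) : IsMotzkinPath (1 :: (w ++ [0])) := by
  refine ⟨fun t ht => ?_, by simp [hw.2, mval]⟩
  rcases List.prefix_cons_iff.mp ht with rfl | ⟨t', rfl, ht'⟩
  · simp
  rcases List.prefix_concat_iff.mp ht' with rfl | ht'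
  · simp [hw.2, mval]
  · have := hw.1 t' ht'
    simp only [vsum_cons, mval, if_pos]
    omega

lemma vsum_pos_of_prefix_cons_one (hw : IsMotzkinPath w) (hu : u <+: 1 :: w) (hne : u ≠ []) :
    0 < vsum u := by
  rcases List.prefix_cons_iff.mp hu with rfl | ⟨t, rfl, ht⟩
  · exact absurd rfl hne
  · have := hw.1 t ht
    simp only [vsum_cons, mval, if_pos]
    omega

end IsMotzkinPath

lemma isMotzkinPath_of_mem_elevatedSet {q m : ℕ} {w : List ℕ} (h : w ∈ ElevatedSet q m) :
    IsMotzkinPath w := by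
  obtain ⟨-, α, hα, rfl⟩ := h
  exact hα.2.isMotzkinPath.elevate

lemma two_le_of_mem_elevatedSet {q m : ℕ} {w : List ℕ} (h : w ∈ ElevatedSet q m) :
    2 ≤ m := by
  obtain ⟨hlen, α, -, rfl⟩ := h
  simp only [List.length_cons, List.length_append] at hlen
  omega

lemma isMotzkinPath_of_mem_setA {q n : ℕ} {w : List ℕ} (h : w ∈ SetA q n) : IsMotzkinPath w := by
  obtain ⟨⟨i, -, α, hα, β, hβ, rfl⟩, -⟩ := h
  exact hα.2.isMotzkinPath.append (isMotzkinPath_of_mem_elevatedSet hβ)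

lemma exists_isMotzkinPath_of_mem_setB {q n : ℕ} {w : List ℕ} (h : w ∈ SetB q n) :
    ∃ v, IsMotzkinPath v ∧ w = 1 :: v ∧ w.length = n := by
  obtain ⟨i, -, α, hα, β, hβ, rfl⟩ := h
  refine ⟨α ++ β, hα.2.isMotzkinPath.append (isMotzkinPath_of_mem_elevatedSet hβ), rfl, ?_⟩
  have hβlen : 2 ≤ n - i - 1 := two_le_of_mem_elevatedSet hβ
  simp only [List.length_cons, List.length_append, hα.1, hβ.1]
  omega

lemma vsum_pos_of_prefix_of_mem_setB {q n : ℕ} {w u : List ℕ} (hw : w ∈ SetB q n)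
    (hu : u <+: w) (hne : u ≠ []) : 0 < vsum u := by
  obtain ⟨v, hv, rfl, -⟩ := exists_isMotzkinPath_of_mem_setB hw
  exact hv.vsum_pos_of_prefix_cons_one hu hne

lemma vsum_nonpos_of_suffix_of_mem_setA_union_setB {q n : ℕ} {w u : List ℕ}
    (hw : w ∈ SetA q n ∪ SetB q n) (hu : u <:+ w) (hlen : u.length < n) : vsum u ≤ 0 := by
  rcases hw with hA | hB
  · exact (isMotzkinPath_of_mem_setA hA).vsum_nonpos_of_suffix hu
  · obtain ⟨v, hv, rfl, hwlen⟩ := exists_isMotzkinPath_of_mem_setB hB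
    rcases List.suffix_cons_iff.mp hu with rfl | hu
    · omega
    · exact hv.vsum_nonpos_of_suffix hu

theorem setB_vs_setAB_no_cross_bifix_general (q n : ℕ)
    (w w' : List ℕ) (hw : w ∈ SetB q n) (hw' : w' ∈ SetA q n ∪ SetB q n) :
    ∀ u, u <+: w → u ≠ [] → u.length < w.length → ¬ u <:+ w' := by
  intro u hpre hne hlen hsuf
  obtain ⟨-, -, -, hwlen⟩ := exists_isMotzkinPath_of_mem_setB hw
  have hpos := vsum_pos_of_prefix_of_mem_setB hw hpre hne
  have hnonpos := vsum_nonpos_of_suffix_of_mem_setA_union_setB hw' hsuf (hwlen ▸ hlen)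
  exact hnonpos.not_gt hpos

/-- For w ∈ B_q(n) and w' ∈ A_q(n) ∪ B_q(n), no nonempty proper prefix of
w equals a suffix of w'. -/
theorem setB_vs_setAB_no_cross_bifix (q n : ℕ) (hq : 3 ≤ q) (hn : 3 ≤ n)
    (w w' : List ℕ) (hw : w ∈ SetB q n) (hw' : w' ∈ SetA q n ∪ SetB q n) :
    ∀ u, u <+: w → u ≠ [] → u.length < w.length → ¬ u <:+ w' :=
  setB_vs_setAB_no_cross_bifix_general q n w w' hw hw'
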